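/- Closed form of the DRIG-A estimator: Let $\Sigma_0 = \mathbb{E}[X^0{X^0}^\top] \succ 0$, $g_0 = \mathbb{E}[X^0 Y^0]$, $\Delta_x = \sum_e\omega^e(\mathbb{E}[X^e{X^e}^\top] - \Sigma_0)$ symmetric PSD, $\Delta_{xy} = \sum_e\omega^e(\mathbb{E}[X^eY^e] - g_0)$, $\Gamma_x \in \mathbb{R}^{p\times p}$ symmetric, $\gamma_y \in \mathbb{R}$, and suppose $\Sigma_0 + \Gamma_x \Delta_x \Gamma_x \succ 0$. Then the minimizer of $b \mapsto \mathbb{E}[(Y^0 - b^\top X^0)^2] + \sum_e \omega^e\big(\mathbb{E}[(\gamma_y Y^e - b^\top\Gamma_x X^e)^2] - \mathbb{E}[(\gamma_y Y^0 - b^\top\Gamma_x X^0)^2]\big)$ is uniquely $b^{\mathrm{opt}}_\Gamma = (\Sigma_0 + \Gamma_x\Delta_x\Gamma_x)^{-1}(g_0 + \gamma_y\Gamma_x\Delta_{xy})$. -/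

import Mathlib

/-!
Expanding the squares, every expected loss `E[(α Y - c ⬝ X)²]` is a quadratic polynomial in `c`
whose coefficients are the moments `E[Y²]`, `E[X Xᵀ]`, `E[X Y]`, and it depends affinely on these
moments. Hence the weighted differences of losses collapse to a single loss with moments
`Δx`, `Δxy`, and with `c = Γₓ b` the objective becomes `bᵀ M b - 2 bᵀ v + const` for
`M = Σ₀ + Γₓ Δₓ Γₓ`, `v = g₀ + γ_y Γₓ Δ_{xy}`. Completing the square, the objective exceeds its
value at `M⁻¹ v` by `(b - M⁻¹ v)ᵀ M (b - M⁻¹ v)`, which is positive for `b ≠ M⁻¹ v`.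
-/

open Matrix MeasureTheory Finset

namespace Matrix

variable {n : Type*} [Fintype n]

theorem IsSymm.dotProduct_mulVec_comm {A : Matrix n n ℝ} (hA : A.IsSymm) (x y : n → ℝ) :
    x ⬝ᵥ (A *ᵥ y) = (A *ᵥ x) ⬝ᵥ y := by
  rw [← hA.eq, dotProduct_transpose_mulVec, dotProduct_comm, hA.eq]

theorem IsSymm.quadratic_sub_eq {M : Matrix n n ℝ} (hM : M.IsSymm) {x₀ v : n → ℝ}
    (hx₀ : M *ᵥ x₀ = v) (b : n → ℝ) :
    (b ⬝ᵥ (M *ᵥ b) - 2 * (b ⬝ᵥ v)) - (x₀ ⬝ᵥ (M *ᵥ x₀) - 2 * (x₀ ⬝ᵥ v))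
      = (b - x₀) ⬝ᵥ (M *ᵥ (b - x₀)) := by
  have hsymm : x₀ ⬝ᵥ (M *ᵥ b) = b ⬝ᵥ v := by
    rw [hM.dotProduct_mulVec_comm, hx₀, dotProduct_comm]
  rw [mulVec_sub, dotProduct_sub, sub_dotProduct, sub_dotProduct, hsymm, hx₀]
  ring

theorem PosDef.quadratic_uniqueMin [DecidableEq n] {M : Matrix n n ℝ} (hM : M.PosDef)
    (v : n → ℝ) (c : ℝ) {q : (n → ℝ) → ℝ}
    (hq : ∀ b, q b = b ⬝ᵥ (M *ᵥ b) - 2 * (b ⬝ᵥ v) + c) :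
    (∀ b, q (M⁻¹ *ᵥ v) ≤ q b) ∧ (∀ b, q b = q (M⁻¹ *ᵥ v) → b = M⁻¹ *ᵥ v) := by
  have hx₀ : M *ᵥ (M⁻¹ *ᵥ v) = v := by
    rw [mulVec_mulVec, mul_nonsing_inv _ (isUnit_iff_ne_zero.2 hM.det_pos.ne'), one_mulVec]
  have hdiff : ∀ b, q b - q (M⁻¹ *ᵥ v) = (b - M⁻¹ *ᵥ v) ⬝ᵥ (M *ᵥ (b - M⁻¹ *ᵥ v)) := by
    intro b
    rw [hq, hq, ← (isHermitian_iff_isSymm.1 hM.isHermitian).quadratic_sub_eq hx₀]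
    ring
  have hpos : ∀ b, b ≠ M⁻¹ *ᵥ v → 0 < q b - q (M⁻¹ *ᵥ v) := fun b hb => by
    simpa [hdiff] using hM.dotProduct_mulVec_pos (sub_ne_zero.2 hb)
  refine ⟨fun b => ?_, fun b hb => ?_⟩
  · rcases eq_or_ne b (M⁻¹ *ᵥ v) with rfl | hb
    · rfl
    · linarith [hpos b hb]
  · by_contra hne
    linarith [hpos b hne]

end Matrix

section LossOfMoments

variable {n : Type*} [Fintype n]

/-- `E[(α Y - c ⬝ X)²]` written through the moments `s = E[Y²]`, `S = E[X Xᵀ]`, `m = E[X Y]`. -/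
noncomputable def lossOfMoments (s : ℝ) (S : Matrix n n ℝ) (m : n → ℝ) (α : ℝ) (c : n → ℝ) : ℝ :=
  α ^ 2 * s - 2 * α * (c ⬝ᵥ m) + c ⬝ᵥ (S *ᵥ c)

theorem sum_mul_lossOfMoments_sub {ι : Type*} (t : Finset ι) (w : ι → ℝ)
    (s : ι → ℝ) (S : ι → Matrix n n ℝ) (m : ι → n → ℝ) (s₀ : ℝ) (S₀ : Matrix n n ℝ)
    (m₀ : n → ℝ) (α : ℝ) (c : n → ℝ) :
    ∑ e ∈ t, w e * (lossOfMoments (s e) (S e) (m e) α c - lossOfMoments s₀ S₀ m₀ α c)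
      = lossOfMoments (∑ e ∈ t, w e * (s e - s₀)) (∑ e ∈ t, w e • (S e - S₀))
          (∑ e ∈ t, w e • (m e - m₀)) α c := by
  simp only [lossOfMoments, sum_mulVec, dotProduct_sum, smul_mulVec, dotProduct_smul, sub_mulVec,
    dotProduct_sub, mul_sum, smul_eq_mul, ← sum_add_distrib, ← sum_sub_distrib]
  exact sum_congr rfl fun e _ => by ring

theorem lossOfMoments_add_lossOfMoments_mulVec {Γ : Matrix n n ℝ}
    (hΓ : Γ.IsSymm) (s t γ : ℝ) (S D : Matrix n n ℝ) (m d b : n → ℝ) :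
    lossOfMoments s S m 1 b + lossOfMoments t D d γ (Γ *ᵥ b)
      = b ⬝ᵥ ((S + Γ * D * Γ) *ᵥ b) - 2 * (b ⬝ᵥ (m + γ • (Γ *ᵥ d))) + (s + γ ^ 2 * t) := by
  have hquad : b ⬝ᵥ ((Γ * D * Γ) *ᵥ b) = (Γ *ᵥ b) ⬝ᵥ (D *ᵥ (Γ *ᵥ b)) := by
    rw [← mulVec_mulVec, ← mulVec_mulVec, hΓ.dotProduct_mulVec_comm]
  have hlin : b ⬝ᵥ (Γ *ᵥ d) = (Γ *ᵥ b) ⬝ᵥ d := hΓ.dotProduct_mulVec_comm b d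
  rw [lossOfMoments, lossOfMoments, add_mulVec, dotProduct_add, hquad, dotProduct_add,
    dotProduct_smul, hlin, smul_eq_mul]
  ring

end LossOfMoments

section Moments

variable {n Ω : Type*} [Fintype n] [MeasurableSpace Ω] (P : Measure Ω)

noncomputable def secondMomentMatrix (X : Ω → n → ℝ) : Matrix n n ℝ :=
  Matrix.of fun i j => ∫ ω, X ω i * X ω j ∂P

noncomputable def crossMoment (X : Ω → n → ℝ) (Y : Ω → ℝ) : n → ℝ :=
  fun i => ∫ ω, X ω i * Y ω ∂P

variable {P} {X : Ω → n → ℝ} {Y : Ω → ℝ}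

theorem integrable_dotProduct_mul (hXY : ∀ i, Integrable (fun ω => X ω i * Y ω) P)
    (c : n → ℝ) : Integrable (fun ω => (c ⬝ᵥ X ω) * Y ω) P := by
  simp only [dotProduct, sum_mul, mul_assoc]
  exact integrable_finsetSum _ fun i _ => (hXY i).const_mul _

theorem integral_dotProduct_mul (hXY : ∀ i, Integrable (fun ω => X ω i * Y ω) P)
    (c : n → ℝ) : ∫ ω, (c ⬝ᵥ X ω) * Y ω ∂P = c ⬝ᵥ crossMoment P X Y := by
  simp only [dotProduct, sum_mul, mul_assoc]
  rw [integral_finsetSum _ fun i _ => (hXY i).const_mul _]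
  simp only [integral_const_mul, crossMoment]

theorem dotProduct_sq_eq_sum (c x : n → ℝ) :
    (c ⬝ᵥ x) ^ 2 = ∑ i, c i * ∑ j, x i * x j * c j := by
  simp only [sq, dotProduct, sum_mul, mul_sum]
  exact sum_congr rfl fun i _ => sum_congr rfl fun j _ => by ring

theorem integrable_dotProduct_sq (hXX : ∀ i j, Integrable (fun ω => X ω i * X ω j) P)
    (c : n → ℝ) : Integrable (fun ω => (c ⬝ᵥ X ω) ^ 2) P := by
  simp only [dotProduct_sq_eq_sum]
  exact integrable_finsetSum _ fun i _ => (integrable_finsetSum _ fun j _ =>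
    (hXX i j).mul_const _).const_mul _

theorem integral_dotProduct_sq (hXX : ∀ i j, Integrable (fun ω => X ω i * X ω j) P)
    (c : n → ℝ) :
    ∫ ω, (c ⬝ᵥ X ω) ^ 2 ∂P = c ⬝ᵥ (secondMomentMatrix P X *ᵥ c) := by
  simp only [dotProduct_sq_eq_sum]
  rw [integral_finsetSum _ fun i _ => (integrable_finsetSum _ fun j _ =>
    (hXX i j).mul_const _).const_mul _]
  refine sum_congr rfl fun i _ => ?_
  rw [integral_const_mul, integral_finsetSum _ fun j _ => (hXX i j).mul_const _]
  simp only [integral_mul_const, mulVec, dotProduct, secondMomentMatrix, of_apply]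

theorem integral_sq_sub_dotProduct (hXX : ∀ i j, Integrable (fun ω => X ω i * X ω j) P)
    (hXY : ∀ i, Integrable (fun ω => X ω i * Y ω) P) (hYY : Integrable (fun ω => Y ω ^ 2) P)
    (α : ℝ) (c : n → ℝ) :
    ∫ ω, (α * Y ω - c ⬝ᵥ X ω) ^ 2 ∂P
      = lossOfMoments (∫ ω, Y ω ^ 2 ∂P) (secondMomentMatrix P X) (crossMoment P X Y) α c := by
  have hexpand : ∀ ω, (α * Y ω - c ⬝ᵥ X ω) ^ 2
      = α ^ 2 * Y ω ^ 2 - 2 * α * ((c ⬝ᵥ X ω) * Y ω) + (c ⬝ᵥ X ω) ^ 2 := fun ω => by ring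
  have hY : Integrable (fun ω => α ^ 2 * Y ω ^ 2) P := hYY.const_mul _
  have hXY' : Integrable (fun ω => 2 * α * ((c ⬝ᵥ X ω) * Y ω)) P :=
    (integrable_dotProduct_mul hXY c).const_mul _
  simp only [hexpand]
  rw [integral_add (f := fun ω => α ^ 2 * Y ω ^ 2 - 2 * α * ((c ⬝ᵥ X ω) * Y ω)) (hY.sub hXY')
      (integrable_dotProduct_sq hXX c), integral_sub hY hXY',
    integral_const_mul, integral_const_mul, integral_dotProduct_mul hXY,
    integral_dotProduct_sq hXX, lossOfMoments]

end Moments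

theorem driga_closed_form_general {p : ℕ} {ι : Type*} [Fintype ι] (e₀ : ι)
    {Ω : Type*} [MeasurableSpace Ω] (P : Measure Ω)
    (X : ι → Ω → Fin p → ℝ) (Y : ι → Ω → ℝ)
    (hXX : ∀ e i j, Integrable (fun ω => X e ω i * X e ω j) P)
    (hXY : ∀ e i, Integrable (fun ω => X e ω i * Y e ω) P)
    (hYY : ∀ e, Integrable (fun ω => (Y e ω) ^ 2) P)
    (ωw : ι → ℝ)
    (Sig0 : Matrix (Fin p) (Fin p) ℝ)
    (hSig0 : Sig0 = Matrix.of fun i j => ∫ ω, X e₀ ω i * X e₀ ω j ∂P)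
    (g0 : Fin p → ℝ) (hg0 : ∀ i, g0 i = ∫ ω, X e₀ ω i * Y e₀ ω ∂P)
    (Δx : Matrix (Fin p) (Fin p) ℝ)
    (hΔx : Δx = ∑ e, ωw e •
        ((Matrix.of fun i j => ∫ ω, X e ω i * X e ω j ∂P) - Sig0))
    (Δxy : Fin p → ℝ)
    (hΔxy : ∀ i, Δxy i = ∑ e, ωw e * ((∫ ω, X e ω i * Y e ω ∂P) - g0 i))
    (Γx : Matrix (Fin p) (Fin p) ℝ) (hΓx : Γx.IsSymm) (γy : ℝ)
    (hPD : (Sig0 + Γx * Δx * Γx).PosDef)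
    (f : (Fin p → ℝ) → ℝ)
    (hf : ∀ b, f b = (∫ ω, (Y e₀ ω - b ⬝ᵥ X e₀ ω) ^ 2 ∂P)
        + ∑ e, ωw e * ((∫ ω, (γy * Y e ω - b ⬝ᵥ (Γx *ᵥ X e ω)) ^ 2 ∂P)
            - ∫ ω, (γy * Y e₀ ω - b ⬝ᵥ (Γx *ᵥ X e₀ ω)) ^ 2 ∂P))
    (bopt : Fin p → ℝ)
    (hbopt : bopt = (Sig0 + Γx * Δx * Γx)⁻¹ *ᵥ (g0 + γy • (Γx *ᵥ Δxy))) :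
    (∀ b, f bopt ≤ f b) ∧ (∀ b, f b = f bopt → b = bopt) := by
  have hSig0' : Sig0 = secondMomentMatrix P (X e₀) := hSig0
  have hg0' : g0 = crossMoment P (X e₀) (Y e₀) := funext hg0
  have hΔx' : Δx = ∑ e, ωw e • (secondMomentMatrix P (X e) - Sig0) := hΔx
  have hΔxy' : Δxy = ∑ e, ωw e • (crossMoment P (X e) (Y e) - g0) := by
    ext i
    simp only [hΔxy, Finset.sum_apply, Pi.smul_apply, Pi.sub_apply, smul_eq_mul, crossMoment]
  subst hbopt hΔx' hΔxy' hSig0' hg0'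
  refine hPD.quadratic_uniqueMin _ (∫ ω, Y e₀ ω ^ 2 ∂P
    + γy ^ 2 * ∑ e, ωw e * (∫ ω, Y e ω ^ 2 ∂P - ∫ ω, Y e₀ ω ^ 2 ∂P)) fun b => ?_
  have hloss₀ : ∫ ω, (Y e₀ ω - b ⬝ᵥ X e₀ ω) ^ 2 ∂P = lossOfMoments (∫ ω, Y e₀ ω ^ 2 ∂P)
      (secondMomentMatrix P (X e₀)) (crossMoment P (X e₀) (Y e₀)) 1 b := by
    simpa using integral_sq_sub_dotProduct (hXX e₀) (hXY e₀) (hYY e₀) 1 b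
  have hloss : ∀ e, ∫ ω, (γy * Y e ω - b ⬝ᵥ (Γx *ᵥ X e ω)) ^ 2 ∂P = lossOfMoments
      (∫ ω, Y e ω ^ 2 ∂P) (secondMomentMatrix P (X e)) (crossMoment P (X e) (Y e)) γy
      (Γx *ᵥ b) := fun e => by
    simp_rw [hΓx.dotProduct_mulVec_comm b]
    exact integral_sq_sub_dotProduct (hXX e) (hXY e) (hYY e) γy _
  rw [hf, hloss₀]
  simp only [hloss]
  rw [sum_mul_lossOfMoments_sub, lossOfMoments_add_lossOfMoments_mulVec hΓx]

/-- Closed form of the DRIG-A estimator: the DRIG-A population objective is uniquely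
minimized at `b^opt_Γ = (Σ₀ + Γₓ Δₓ Γₓ)⁻¹ (g₀ + γ_y Γₓ Δ_{xy})`. -/
theorem driga_closed_form {p : ℕ} {ι : Type*} [Fintype ι] (e₀ : ι)
    {Ω : Type*} [MeasurableSpace Ω] (P : Measure Ω) [IsProbabilityMeasure P]
    (X : ι → Ω → Fin p → ℝ) (Y : ι → Ω → ℝ)
    (hXX : ∀ e i j, Integrable (fun ω => X e ω i * X e ω j) P)
    (hXY : ∀ e i, Integrable (fun ω => X e ω i * Y e ω) P)
    (hYY : ∀ e, Integrable (fun ω => (Y e ω) ^ 2) P)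
    (ωw : ι → ℝ) (hωpos : ∀ e, 0 < ωw e) (hωsum : ∑ e, ωw e = 1)
    (Sig0 : Matrix (Fin p) (Fin p) ℝ)
    (hSig0 : Sig0 = Matrix.of fun i j => ∫ ω, X e₀ ω i * X e₀ ω j ∂P)
    (hSig0PD : Sig0.PosDef)
    (g0 : Fin p → ℝ) (hg0 : ∀ i, g0 i = ∫ ω, X e₀ ω i * Y e₀ ω ∂P)
    (Δx : Matrix (Fin p) (Fin p) ℝ)
    (hΔx : Δx = ∑ e, ωw e •
        ((Matrix.of fun i j => ∫ ω, X e ω i * X e ω j ∂P) - Sig0))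
    (hΔxPSD : Δx.PosSemidef)
    (Δxy : Fin p → ℝ)
    (hΔxy : ∀ i, Δxy i = ∑ e, ωw e * ((∫ ω, X e ω i * Y e ω ∂P) - g0 i))
    (Γx : Matrix (Fin p) (Fin p) ℝ) (hΓx : Γx.IsSymm) (γy : ℝ)
    (hPD : (Sig0 + Γx * Δx * Γx).PosDef)
    (f : (Fin p → ℝ) → ℝ)
    (hf : ∀ b, f b = (∫ ω, (Y e₀ ω - b ⬝ᵥ X e₀ ω) ^ 2 ∂P)
        + ∑ e, ωw e * ((∫ ω, (γy * Y e ω - b ⬝ᵥ (Γx *ᵥ X e ω)) ^ 2 ∂P)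
            - ∫ ω, (γy * Y e₀ ω - b ⬝ᵥ (Γx *ᵥ X e₀ ω)) ^ 2 ∂P))
    (bopt : Fin p → ℝ)
    (hbopt : bopt = (Sig0 + Γx * Δx * Γx)⁻¹ *ᵥ (g0 + γy • (Γx *ᵥ Δxy))) :
    (∀ b, f bopt ≤ f b) ∧ (∀ b, f b = f bopt → b = bopt) :=
  driga_closed_form_general e₀ P X Y hXX hXY hYY ωw Sig0 hSig0 g0 hg0 Δx hΔx Δxy hΔxy Γx hΓx γy hPD
    f hf bopt hbopt
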